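/- Let μ be a distribution on a metric space and μ_n the empirical distribution placing mass 1/n on the point masses of a uniform distribution μ over n fixed points x_1,...,x_n that are pairwise at distance at least ε. If κ_n denotes the fraction of the points x_i receiving zero empirical mass, then W_p(μ̂_n, μ_n) ≥ ε·κ_n^{1/p}, where μ̂_n is the empirical measure of n i.i.d. draws from μ_n. -/

import Mathlib

/-!
Every coupling of `μ̂_n` with `μ_n` must send the mass `κ_n` that `μ_n` puts on the missed
points to them from the sample points, which by separation lie at distance at least `ε`; so
every transport plan costs at least `ε ^ p κ_n`. The product coupling shows the optimal cost is
finite, so this lower bound survives the passage to `W_p`.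
-/

open MeasureTheory
open scoped ENNReal

/-- The Wasserstein distance of order `p` on a metric space: the infimum over all
couplings `ξ` of `μ` and `ν` of `(∫ dist(x,y)^p dξ)^{1/p}`. -/
noncomputable def wassersteinDist {α : Type*} [MetricSpace α] [MeasurableSpace α]
    (p : ℝ) (μ ν : Measure α) : ℝ :=
  ((⨅ ξ ∈ {ξ : Measure (α × α) | ξ.map Prod.fst = μ ∧ ξ.map Prod.snd = ν},
      ∫⁻ q, ENNReal.ofReal (dist q.1 q.2 ^ p) ∂ξ) ^ (1 / p)).toReal

/-- The empirical measure of an `n`-tuple of points: mass `1/n` at each `x i`. -/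
noncomputable def empiricalMeasure {α : Type*} [MeasurableSpace α] {n : ℕ}
    (x : Fin n → α) : Measure α :=
  (n : ℝ≥0∞)⁻¹ • ∑ i, Measure.dirac (x i)

noncomputable section

namespace Wasserstein

variable {α : Type*} [MeasurableSpace α]

def couplings (μ ν : Measure α) : Set (Measure (α × α)) :=
  {ξ | ξ.map Prod.fst = μ ∧ ξ.map Prod.snd = ν}

lemma prod_mem_couplings (μ ν : Measure α) [IsProbabilityMeasure μ] [IsProbabilityMeasure ν] :
    μ.prod ν ∈ couplings μ ν := by
  simp [couplings, Measure.map_fst_prod, Measure.map_snd_prod]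

lemma ae_mem_of_mem_couplings {μ ν : Measure α} {ξ : Measure (α × α)} (hξ : ξ ∈ couplings μ ν)
    {S T : Set α} (hS : ∀ᵐ a ∂μ, a ∈ S) (hT : ∀ᵐ b ∂ν, b ∈ T) :
    ∀ᵐ q ∂ξ, q.1 ∈ S ∧ q.2 ∈ T := by
  have hS' := ae_of_ae_map measurable_fst.aemeasurable (hξ.1 ▸ hS)
  have hT' := ae_of_ae_map measurable_snd.aemeasurable (hξ.2 ▸ hT)
  filter_upwards [hS', hT'] with q hq₁ hq₂ using ⟨hq₁, hq₂⟩

variable [PseudoMetricSpace α]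

def transportCost (p : ℝ) (ξ : Measure (α × α)) : ℝ≥0∞ :=
  ∫⁻ q, ENNReal.ofReal (dist q.1 q.2 ^ p) ∂ξ

def optimalTransportCost (p : ℝ) (μ ν : Measure α) : ℝ≥0∞ :=
  ⨅ ξ ∈ couplings μ ν, transportCost p ξ

lemma ofReal_rpow_mul_le_transportCost {p ε : ℝ} (hp : 0 ≤ p) (hε : 0 ≤ ε) {μ ν : Measure α}
    {ξ : Measure (α × α)} (hξ : ξ ∈ couplings μ ν) {A B : Set α} (hA : ∀ᵐ a ∂μ, a ∈ A)
    (hB : MeasurableSet B) (hAB : ∀ a ∈ A, ∀ b ∈ B, ε ≤ dist a b) :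
    ENNReal.ofReal (ε ^ p) * ν B ≤ transportCost p ξ := by
  have h_pointwise : ∀ᵐ q ∂ξ,
      B.indicator (fun _ ↦ ENNReal.ofReal (ε ^ p)) q.2 ≤ ENNReal.ofReal (dist q.1 q.2 ^ p) := by
    filter_upwards [ae_mem_of_mem_couplings hξ hA (T := Set.univ) (by simp)] with q hq
    by_cases hqB : q.2 ∈ B
    · rw [Set.indicator_of_mem hqB]
      gcongr
      exact hAB _ hq.1 _ hqB
    · simp [hqB]
  calc ENNReal.ofReal (ε ^ p) * ν B
      = ∫⁻ b, B.indicator (fun _ ↦ ENNReal.ofReal (ε ^ p)) b ∂(ξ.map Prod.snd) := by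
        rw [hξ.2, lintegral_indicator_const hB]
    _ = ∫⁻ q, B.indicator (fun _ ↦ ENNReal.ofReal (ε ^ p)) q.2 ∂ξ :=
        lintegral_map (measurable_const.indicator hB) measurable_snd
    _ ≤ transportCost p ξ := lintegral_mono_ae h_pointwise

lemma optimalTransportCost_ne_top {p : ℝ} (hp : 0 ≤ p) (μ ν : Measure α)
    [IsProbabilityMeasure μ] [IsProbabilityMeasure ν] {S : Set α} (hS : Bornology.IsBounded S)
    (hμ : ∀ᵐ a ∂μ, a ∈ S) (hν : ∀ᵐ b ∂ν, b ∈ S) :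
    optimalTransportCost p μ ν ≠ ∞ := by
  have h_bound : ∀ᵐ q ∂μ.prod ν,
      ENNReal.ofReal (dist q.1 q.2 ^ p) ≤ ENNReal.ofReal (Metric.diam S ^ p) := by
    filter_upwards [ae_mem_of_mem_couplings (prod_mem_couplings μ ν) hμ hν] with q ⟨h₁, h₂⟩
    gcongr
    exact Metric.dist_le_diam_of_mem hS h₁ h₂
  refine ne_top_of_le_ne_top (ENNReal.ofReal_ne_top (r := Metric.diam S ^ p)) ?_
  calc optimalTransportCost p μ ν ≤ transportCost p (μ.prod ν) :=
        iInf₂_le _ (prod_mem_couplings μ ν)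
    _ ≤ ∫⁻ _, ENNReal.ofReal (Metric.diam S ^ p) ∂μ.prod ν := lintegral_mono_ae h_bound
    _ = ENNReal.ofReal (Metric.diam S ^ p) := by simp

end Wasserstein

end

open Wasserstein

lemma wassersteinDist_eq {α : Type*} [MetricSpace α] [MeasurableSpace α] (p : ℝ)
    (μ ν : Measure α) :
    wassersteinDist p μ ν = (optimalTransportCost p μ ν ^ (1 / p)).toReal :=
  rfl

lemma le_wassersteinDist_of_ofReal_rpow_le {α : Type*} [MetricSpace α] [MeasurableSpace α]
    {p c : ℝ} (hp : 0 < p) (hc : 0 ≤ c) {μ ν : Measure α}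
    (hfin : optimalTransportCost p μ ν ≠ ∞)
    (h : ENNReal.ofReal (c ^ p) ≤ optimalTransportCost p μ ν) :
    c ≤ wassersteinDist p μ ν := by
  have h_root : ENNReal.ofReal (c ^ p) ^ (1 / p) ≤ optimalTransportCost p μ ν ^ (1 / p) :=
    ENNReal.rpow_le_rpow h (by positivity)
  rw [wassersteinDist_eq]
  calc c = (ENNReal.ofReal (c ^ p) ^ (1 / p)).toReal := by
        rw [← ENNReal.toReal_rpow, ENNReal.toReal_ofReal (by positivity), one_div,
          Real.rpow_rpow_inv hc hp.ne']
    _ ≤ _ := ENNReal.toReal_mono (ENNReal.rpow_ne_top_of_nonneg (by positivity) hfin) h_root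

section empiricalMeasure

variable {α : Type*} [MeasurableSpace α] {n : ℕ}

lemma empiricalMeasure_apply (x : Fin n → α) {s : Set α} (hs : MeasurableSet s) :
    empiricalMeasure x s = (Nat.card {i // x i ∈ s} : ℝ≥0∞) / n := by
  classical
  simp [empiricalMeasure, Measure.smul_apply, Measure.finsetSum_apply,
    Measure.dirac_apply' _ hs, Set.indicator_apply, Finset.sum_boole, Nat.card_eq_fintype_card,
    Fintype.card_subtype, ENNReal.div_eq_inv_mul]

lemma isProbabilityMeasure_empiricalMeasure (hn : 0 < n) (x : Fin n → α) :
    IsProbabilityMeasure (empiricalMeasure x) := by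
  refine ⟨?_⟩
  rw [empiricalMeasure_apply x MeasurableSet.univ]
  simp [ENNReal.div_self, hn.ne']

variable [MeasurableSingletonClass α]

lemma ae_mem_range_empiricalMeasure (x : Fin n → α) :
    ∀ᵐ a ∂empiricalMeasure x, a ∈ Set.range x := by
  change empiricalMeasure x (Set.range x)ᶜ = 0
  rw [empiricalMeasure_apply x (Set.finite_range x).measurableSet.compl]
  simp

end empiricalMeasure

/-- Wasserstein lower bound for missed separated points:
let `μ_n` be uniform on points `x_1, …, x_n` that are pairwise at distance at
least `ε`, and let `μ̂_n` be the empirical measure of `n` samples from `μ_n`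
(each sample lying in `{x_1, …, x_n}`).  If `κ_n` is the fraction of the points
`x_i` receiving zero empirical mass (i.e. `x i ∉ range y`), then
`W_p(μ̂_n, μ_n) ≥ ε κ_n^{1/p}`. -/
theorem wasserstein_missed_points_lower_bound
    {α : Type*} [MetricSpace α] [MeasurableSpace α] [BorelSpace α]
    (p : ℝ) (hp : 1 ≤ p) {n : ℕ} (hn : 0 < n)
    (ε : ℝ) (hε : 0 < ε)
    (x : Fin n → α) (hsep : ∀ i j, i ≠ j → ε ≤ dist (x i) (x j))
    (y : Fin n → α) (hy : ∀ i, y i ∈ Set.range x) :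
    ε * ((Nat.card {i : Fin n // x i ∉ Set.range y} : ℝ) / n) ^ (1 / p)
      ≤ wassersteinDist p (empiricalMeasure y) (empiricalMeasure x) := by
  have hp₀ : 0 < p := by linarith
  have := isProbabilityMeasure_empiricalMeasure hn x
  have := isProbabilityMeasure_empiricalMeasure hn y
  set κ : ℝ := (Nat.card {i : Fin n // x i ∉ Set.range y} : ℝ) / n
  set missed := Set.range x \ Set.range y
  have h_meas : MeasurableSet missed := (Set.finite_range x).sdiff.measurableSet
  have h_missed : empiricalMeasure x missed = ENNReal.ofReal κ := by
    rw [empiricalMeasure_apply x h_meas,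
      ENNReal.ofReal_div_of_pos (by exact_mod_cast hn), ENNReal.ofReal_natCast,
      ENNReal.ofReal_natCast]
    simp [missed]
  have h_far : ∀ a ∈ Set.range y, ∀ b ∈ missed, ε ≤ dist a b := by
    rintro a ha _ ⟨⟨j, rfl⟩, hj⟩
    obtain ⟨i, rfl⟩ := Set.range_subset_iff.2 hy ha
    exact hsep i j (by rintro rfl; exact hj ha)
  have h_sample_support : ∀ᵐ a ∂empiricalMeasure y, a ∈ Set.range x :=
    (ae_mem_range_empiricalMeasure y).mono fun a ha ↦ Set.range_subset_iff.2 hy ha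
  refine le_wassersteinDist_of_ofReal_rpow_le hp₀ (by positivity)
    (optimalTransportCost_ne_top hp₀.le _ _ (Set.finite_range x).isBounded
      h_sample_support (ae_mem_range_empiricalMeasure x)) ?_
  rw [Real.mul_rpow hε.le (by positivity), one_div, Real.rpow_inv_rpow (by positivity) hp₀.ne',
    ENNReal.ofReal_mul (by positivity), ← h_missed]
  exact le_iInf₂ fun ξ hξ ↦ ofReal_rpow_mul_le_transportCost hp₀.le hε.le hξ
    (ae_mem_range_empiricalMeasure y) h_meas h_far
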